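/- arXiv:0911.5646 — 8 statements merged into one kernel-verified Lean document; each statement's English description precedes it below -/
import Mathlib

section
/- Let n₁ > 1, k > 0, d > 0 and θ = √(1 - 1/n₁²). Then for each integer j with 1 ≤ j ≤ N where N = ⌊n₁ k d θ / π⌋, the equation tan(y) = -y/√((n₁ k d θ)² - y²) has exactly one solution y in the open interval (π/2 + (j-1)π, π/2 + jπ) ∩ (0, n₁ k d θ). -/
/-!
Put `F y = tan y + y / √(A² - y²)`. On `(nπ - π/2, nπ + π/2) ∩ [0, A)` both summands are
strictly increasing, so `F` has at most one zero there. For existence, clear denominators: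
`H y = sin y * √(A² - y²) + y * cos y` is continuous on `ℝ` and takes the values
`-cos (nπ) * √(A² - (nπ - π/2)²)` and `nπ * cos (nπ)` of opposite signs at the ends of
`[nπ - π/2, nπ]`. At a zero of `H` inside, `cos y ≠ 0` (else `sin y = 0` too), so `F y = 0`.
-/

open Real Set

theorem strictMonoOn_tan_Ioo_int_mul_pi (n : ℤ) :
    StrictMonoOn tan (Ioo (n * π - π / 2) (n * π + π / 2)) := by
  intro x hx y hy hxy
  rw [← tan_periodic.sub_int_mul_eq n, ← tan_periodic.sub_int_mul_eq n (x := y)]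
  exact strictMonoOn_tan ⟨by linarith [hx.1], by linarith [hx.2]⟩
    ⟨by linarith [hy.1], by linarith [hy.2]⟩ (by linarith)

theorem strictMonoOn_div_sqrt_sq_sub_sq (A : ℝ) :
    StrictMonoOn (fun y => y / √(A ^ 2 - y ^ 2)) (Ico 0 A) := by
  rintro u ⟨hu, -⟩ v ⟨-, hvA⟩ huv
  have hsv : 0 < √(A ^ 2 - v ^ 2) := sqrt_pos.mpr (by nlinarith)
  calc u / √(A ^ 2 - u ^ 2) ≤ u / √(A ^ 2 - v ^ 2) :=
        div_le_div_of_nonneg_left hu hsv (sqrt_le_sqrt (by nlinarith))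
    _ < v / √(A ^ 2 - v ^ 2) := div_lt_div_of_pos_right huv hsv

theorem tan_eq_neg_div_sqrt_of_sin_mul_sqrt_add_mul_cos_eq_zero {A y : ℝ} (hy : 0 < y)
    (hyA : y < A) (h : sin y * √(A ^ 2 - y ^ 2) + y * cos y = 0) :
    tan y = -y / √(A ^ 2 - y ^ 2) := by
  have hs : 0 < √(A ^ 2 - y ^ 2) := sqrt_pos.mpr (by nlinarith)
  have hcos : cos y ≠ 0 := by
    intro hc
    have hsin : sin y = 0 := by simpa [hc, hs.ne'] using h
    simpa [hsin, hc] using sin_sq_add_cos_sq y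
  rw [tan_eq_sin_div_cos, div_eq_div_iff hcos hs.ne']
  linarith

theorem exists_sin_mul_sqrt_add_mul_cos_eq_zero {A : ℝ} {n : ℕ} (hn : n ≠ 0)
    (hnA : n * π ≤ A) :
    ∃ y ∈ Ioo (n * π - π / 2) (n * π), sin y * √(A ^ 2 - y ^ 2) + y * cos y = 0 := by
  set H : ℝ → ℝ := fun y => sin y * √(A ^ 2 - y ^ 2) + y * cos y
  have hn' : (1 : ℝ) ≤ n := by exact_mod_cast Nat.one_le_iff_ne_zero.mpr hn
  have hπ := pi_pos
  have hab : n * π - π / 2 ≤ n * π := by linarith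
  have hcos_sq : cos (n * π) ^ 2 = 1 := by
    simpa [sin_nat_mul_pi] using sin_sq_add_cos_sq (n * π)
  have hHa : H (n * π - π / 2) = -cos (n * π) * √(A ^ 2 - (n * π - π / 2) ^ 2) := by
    simp [H, sin_sub_pi_div_two, cos_sub_pi_div_two, sin_nat_mul_pi]
  have hHb : H (n * π) = n * π * cos (n * π) := by
    simp [H, sin_nat_mul_pi]
  have ha : 0 < n * π - π / 2 := by nlinarith
  have hs : 0 < √(A ^ 2 - (n * π - π / 2) ^ 2) :=
    sqrt_pos.mpr (by nlinarith)
  have hsign : H (n * π - π / 2) * H (n * π) < 0 := by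
    have hprod : H (n * π - π / 2) * H (n * π) = -(n * π * √(A ^ 2 - (n * π - π / 2) ^ 2)) := by
      rw [hHa, hHb]
      linear_combination (-(n * π * √(A ^ 2 - (n * π - π / 2) ^ 2))) * hcos_sq
    rw [hprod, neg_neg_iff_pos]
    positivity
  have hzero : (0 : ℝ) ∈ uIcc (H (n * π - π / 2)) (H (n * π)) := by
    rcases (mul_neg_iff.mp hsign) with h | h
    · exact mem_uIcc.mpr (Or.inr ⟨h.2.le, h.1.le⟩)
    · exact mem_uIcc.mpr (Or.inl ⟨h.1.le, h.2.le⟩)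
  have hcont : Continuous H := by fun_prop
  obtain ⟨y, hy, hHy⟩ := intermediate_value_uIcc hcont.continuousOn hzero
  rw [uIcc_of_le hab] at hy
  refine ⟨y, ⟨lt_of_le_of_ne hy.1 ?_, lt_of_le_of_ne hy.2 ?_⟩, hHy⟩
  all_goals rintro rfl; simp [hHy] at hsign

theorem existsUnique_tan_eq_neg_div_sqrt {A : ℝ} {n : ℕ} (hn : n ≠ 0) (hnA : n * π ≤ A) :
    ∃! y : ℝ, (π / 2 + ((n : ℝ) - 1) * π < y ∧ y < π / 2 + (n : ℝ) * π ∧ 0 < y ∧ y < A) ∧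
      tan y = -y / √(A ^ 2 - y ^ 2) := by
  have hπ := pi_pos
  have hn' : (1 : ℝ) ≤ n := by exact_mod_cast Nat.one_le_iff_ne_zero.mpr hn
  obtain ⟨y, ⟨hay, hyb⟩, hy⟩ := exists_sin_mul_sqrt_add_mul_cos_eq_zero hn hnA
  have hy0 : 0 < y := by nlinarith
  have hty := tan_eq_neg_div_sqrt_of_sin_mul_sqrt_add_mul_cos_eq_zero hy0 (by linarith) hy
  refine ⟨y, ⟨⟨by linarith, by linarith, hy0, by linarith⟩, hty⟩, ?_⟩
  rintro z ⟨⟨hz₁, hz₂, hz0, hzA⟩, hz⟩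
  have htan := strictMonoOn_tan_Ioo_int_mul_pi n
  push_cast at htan
  have hmono : StrictMonoOn (fun y => tan y + y / √(A ^ 2 - y ^ 2))
      (Ioo (n * π - π / 2) (n * π + π / 2) ∩ Ico 0 A) :=
    (htan.mono inter_subset_left).add
      ((strictMonoOn_div_sqrt_sq_sub_sq A).mono inter_subset_right)
  refine hmono.injOn ⟨⟨by linarith, by linarith⟩, hz0.le, hzA⟩
    ⟨⟨by linarith, by linarith⟩, hy0.le, by linarith⟩ ?_
  simp only [hz, hty, neg_div, neg_add_cancel]

theorem stmt_0_general (n₁ k d θ : ℝ)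
    (N : ℕ) (hN : N = ⌊n₁ * k * d * θ / π⌋₊)
    (j : ℕ) (hj1 : 1 ≤ j) (hjN : j ≤ N) :
    ∃! y : ℝ,
      (π / 2 + ((j : ℝ) - 1) * π < y ∧ y < π / 2 + (j : ℝ) * π ∧
        0 < y ∧ y < n₁ * k * d * θ) ∧
      Real.tan y = - y / Real.sqrt ((n₁ * k * d * θ) ^ 2 - y ^ 2) := by
  have hj : j ≠ 0 := Nat.one_le_iff_ne_zero.mp hj1
  subst hN
  refine existsUnique_tan_eq_neg_div_sqrt hj ?_
  rw [← le_div_iff₀ pi_pos]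
  exact (Nat.le_floor_iff' hj).mp hjN

/-- Each interval `(π/2+(j-1)π, π/2+jπ)` (intersected with `(0, n₁kdθ)`), for
`1 ≤ j ≤ N = ⌊n₁kdθ/π⌋`, contains exactly one solution of the Pekeris modal equation
`tan y = -y/√((n₁kdθ)² - y²)`. -/
theorem stmt_0 (n₁ k d θ : ℝ) (hn₁ : 1 < n₁) (hk : 0 < k) (hd : 0 < d)
    (hθ : θ = Real.sqrt (1 - 1 / n₁ ^ 2))
    (N : ℕ) (hN : N = ⌊n₁ * k * d * θ / π⌋₊)
    (j : ℕ) (hj1 : 1 ≤ j) (hjN : j ≤ N) :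
    ∃! y : ℝ,
      (π / 2 + ((j : ℝ) - 1) * π < y ∧ y < π / 2 + (j : ℝ) * π ∧
        0 < y ∧ y < n₁ * k * d * θ) ∧
      Real.tan y = - y / Real.sqrt ((n₁ * k * d * θ) ^ 2 - y ^ 2) :=
  stmt_0_general n₁ k d θ N hN j hj1 hjN
end

section
/- Let σ₁ < σ₂ < ⋯ < σ_N be the solutions in (0, n₁kdθ) of tan(y) = -y/√((n₁kdθ)²-y²), with σ_j ∈ (π/2+(j-1)π, π/2+jπ), and suppose n₁kdθ/π - 1 < N ≤ n₁kdθ/π. Then for any α > 1/3 there is a constant C (independent of N) such that sup over 1 ≤ j ≤ N - ⌊N^α⌋ - 1 of |σ_{j+1} - σ_j - π| ≤ C · N^{1/2 - 3α/2} for all N large enough. -/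
/-!
Write `c` for `n₁kdθ`. Since `jπ - σ_j ∈ (-π/2, π/2)` has tangent `σ_j/√(c² - σ_j²)`, the
eigenvalue equation says exactly `σ_j + arcsin (σ_j/c) = jπ`. Hence
`σ_{j+1} - σ_j - π = -(arcsin (σ_{j+1}/c) - arcsin (σ_j/c)) ∈ [-π, 0]`, and by the mean
value theorem for `arcsin` its size is at most `π/√(c² - σ_{j+1}²)`. For `j ≤ N - N^α` the root
`σ_{j+1}` stays at distance `≳ N^α` below `c ≥ Nπ`, so `c² - σ_{j+1}² ≳ N^{1+α}`, and
`N^{-(1+α)/2} ≤ N^{1/2 - 3α/2}` because the index range is empty unless `α < 1`.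
-/

open Real Set

namespace Real

lemma sqrt_one_sub_div_sq {c : ℝ} (hc : 0 < c) (x : ℝ) :
    √(1 - (x / c) ^ 2) = √(c ^ 2 - x ^ 2) / c := by
  rw [show 1 - (x / c) ^ 2 = (c ^ 2 - x ^ 2) / c ^ 2 by field_simp,
    sqrt_div' _ (sq_nonneg c), sqrt_sq hc.le]

lemma arcsin_sub_arcsin_le {a b : ℝ} (ha : 0 ≤ a) (hab : a ≤ b) (hb : b < 1) :
    arcsin b - arcsin a ≤ (b - a) / √(1 - b ^ 2) := by
  rw [div_eq_inv_mul, ← one_div]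
  refine (convex_Icc a b).image_sub_le_mul_sub_of_deriv_le continuous_arcsin.continuousOn
    (differentiableOn_arcsin.mono fun x hx => ?_) (fun x hx => ?_) a (left_mem_Icc.2 hab)
    b (right_mem_Icc.2 hab) hab
  · rw [interior_Icc] at hx
    simp only [mem_compl_iff, mem_insert_iff, mem_singleton_iff, not_or]
    constructor <;> linarith [hx.1, hx.2]
  · rw [interior_Icc] at hx
    rw [deriv_arcsin]
    dsimp only
    have hb0 : 0 < 1 - b ^ 2 := by nlinarith
    gcongr
    · exact ha.trans hx.1.le
    · exact hx.2.le

lemma add_arcsin_div_eq_of_tan_eq {c s : ℝ} (j : ℤ) (hs : |s - j * π| < π / 2) (hsc : |s| < c)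
    (htan : tan s = -s / √(c ^ 2 - s ^ 2)) : s + arcsin (s / c) = j * π := by
  have hc : 0 < c := (abs_nonneg s).trans_lt hsc
  rw [abs_lt] at hs hsc
  have htan' : tan (j * π - s) = s / √(c ^ 2 - s ^ 2) := by
    rw [tan_int_mul_pi_sub, htan, neg_div, neg_neg]
  have hmem : s / c ∈ Ioo (-1 : ℝ) 1 :=
    ⟨by rw [lt_div_iff₀ hc]; linarith, by rw [div_lt_one hc]; linarith⟩
  rw [arcsin_eq_arctan hmem, sqrt_one_sub_div_sq hc, div_div_div_cancel_right₀ hc.ne', ← htan',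
    arctan_tan (by linarith) (by linarith)]
  ring

lemma abs_sub_sub_pi_le_of_add_arcsin {c s s' : ℝ} (hs : 0 ≤ s) (hss' : s ≤ s') (hs' : s' < c)
    (h : s' + arcsin (s' / c) = s + arcsin (s / c) + π) :
    |s' - s - π| ≤ π / √(c ^ 2 - s' ^ 2) := by
  have hc : 0 < c := hs.trans_lt (hss'.trans_lt hs')
  have hdiv : s / c ≤ s' / c := by gcongr
  have hmono : arcsin (s / c) ≤ arcsin (s' / c) := monotone_arcsin hdiv
  have hmvt : arcsin (s' / c) - arcsin (s / c) ≤ (s' - s) / √(c ^ 2 - s' ^ 2) := by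
    have := arcsin_sub_arcsin_le (by positivity) hdiv ((div_lt_one hc).2 hs')
    rwa [sqrt_one_sub_div_sq hc, ← sub_div, div_div_div_cancel_right₀ hc.ne'] at this
  have hgap : 0 < √(c ^ 2 - s' ^ 2) := sqrt_pos.2 (by nlinarith)
  rw [abs_of_nonpos (by linarith)]
  calc -(s' - s - π) = arcsin (s' / c) - arcsin (s / c) := by linarith
    _ ≤ (s' - s) / √(c ^ 2 - s' ^ 2) := hmvt
    _ ≤ π / √(c ^ 2 - s' ^ 2) := by gcongr; linarith

end Real

lemma pi_sq_div_two_mul_le_sq_sub_sq {c s y j K : ℝ} {N : ℕ} (hcN : N * π ≤ c) (hs : 0 < s)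
    (hsj : s < π / 2 + j * π) (hjK : j + K ≤ N) (hyK : y < K + 1) (hy : 3 ≤ y) :
    π ^ 2 / 2 * (y * N) ≤ c ^ 2 - s ^ 2 := by
  have hfar : π / 2 * y ≤ c - s := by
    nlinarith [mul_le_mul_of_nonneg_right hjK pi_pos.le, mul_lt_mul_of_pos_right hyK pi_pos,
      mul_le_mul_of_nonneg_right hy pi_pos.le]
  calc π ^ 2 / 2 * (y * N) = π / 2 * y * (N * π) := by ring
    _ ≤ (c - s) * (c + s) := by
        have hy0 : 0 ≤ π / 2 * y := mul_nonneg (by positivity) (by linarith)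
        exact mul_le_mul hfar (by linarith) (by positivity) (hy0.trans hfar)
    _ = c ^ 2 - s ^ 2 := by ring

lemma pi_div_sqrt_le_two_mul_rpow {x α D : ℝ} (hx : 1 ≤ x) (hα : α ≤ 1)
    (hD : π ^ 2 / 2 * (x ^ α * x) ≤ D) :
    π / √D ≤ 2 * x ^ ((1 : ℝ) / 2 - 3 * α / 2) := by
  have hx0 : 0 < x := one_pos.trans_le hx
  have hD0 : 0 < D := lt_of_lt_of_le (by positivity) hD
  rw [div_le_iff₀ (sqrt_pos.2 hD0)]
  refine le_of_pow_le_pow_left₀ two_ne_zero (by positivity) ?_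
  have hpow : (x ^ ((1 : ℝ) / 2 - 3 * α / 2)) ^ 2 * (x ^ α * x) = x ^ (2 - 2 * α) := by
    rw [← rpow_natCast, ← rpow_mul hx0.le, ← rpow_add_one hx0.ne', ← rpow_add hx0]
    norm_num
    ring_nf
  have hone : 1 ≤ x ^ (2 - 2 * α) := one_le_rpow hx (by linarith)
  calc π ^ 2 ≤ 4 * (x ^ ((1 : ℝ) / 2 - 3 * α / 2)) ^ 2 * (π ^ 2 / 2 * (x ^ α * x)) := by
        nlinarith [pi_pos]
    _ ≤ 4 * (x ^ ((1 : ℝ) / 2 - 3 * α / 2)) ^ 2 * D := by gcongr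
    _ = (2 * x ^ ((1 : ℝ) / 2 - 3 * α / 2) * √D) ^ 2 := by
        rw [mul_pow, mul_pow, sq_sqrt hD0.le]; ring

/-- First differences of the Pekeris modal parameters: if `σ N j` is the solution of
`tan y = -y/√(c N² - y²)` in `(π/2+(j-1)π, π/2+jπ) ∩ (0, c N)`, with
`c N/π - 1 < N ≤ c N/π`, then for any `α > 1/3` there is a constant `C` such that
`|σ_{j+1} - σ_j - π| ≤ C · N^{1/2-3α/2}` uniformly for `1 ≤ j ≤ N - ⌊N^α⌋ - 1`,
for all `N` large enough. -/
theorem stmt_1 (c : ℕ → ℝ) (σ : ℕ → ℕ → ℝ)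
    (hc : ∀ N : ℕ, c N / π - 1 < (N : ℝ) ∧ (N : ℝ) ≤ c N / π)
    (hσmem : ∀ N : ℕ, ∀ j : ℕ, 1 ≤ j → j ≤ N →
      π / 2 + ((j : ℝ) - 1) * π < σ N j ∧ σ N j < π / 2 + (j : ℝ) * π ∧
        0 < σ N j ∧ σ N j < c N)
    (hσeq : ∀ N : ℕ, ∀ j : ℕ, 1 ≤ j → j ≤ N →
      Real.tan (σ N j) = - σ N j / Real.sqrt ((c N) ^ 2 - (σ N j) ^ 2))
    (α : ℝ) (hα : 1 / 3 < α) :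
    ∃ C : ℝ, ∃ N₀ : ℕ, ∀ N : ℕ, N₀ ≤ N → ∀ j : ℕ,
      1 ≤ j → j ≤ N - ⌊(N : ℝ) ^ α⌋₊ - 1 →
      |σ N (j + 1) - σ N j - π| ≤ C * (N : ℝ) ^ ((1 : ℝ) / 2 - 3 * α / 2) := by
  obtain ⟨N₀, hN₀⟩ := Filter.eventually_atTop.1 <|
    ((tendsto_rpow_atTop (by linarith : 0 < α)).comp
      tendsto_natCast_atTop_atTop).eventually_ge_atTop 3
  refine ⟨2, N₀, fun N hN j hj hjK => ?_⟩
  have h3 : 3 ≤ (N : ℝ) ^ α := hN₀ N hN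
  have hK : (N : ℝ) ^ α < ⌊(N : ℝ) ^ α⌋₊ + 1 := Nat.lt_floor_add_one _
  have hjN : (j : ℝ) + 1 + ⌊(N : ℝ) ^ α⌋₊ ≤ N := by
    exact_mod_cast (by omega : j + 1 + _ ≤ N)
  have hNα : (N : ℝ) ^ α < N := by linarith [Nat.cast_nonneg (α := ℝ) j]
  have hα1 : α ≤ 1 := by
    refine ((rpow_lt_rpow_left_iff (x := N) (by linarith)).1 ?_).le
    rwa [rpow_one]
  have hphase (i : ℕ) (hi : 1 ≤ i) (hiN : i ≤ N) : σ N i + arcsin (σ N i / c N) = i * π := by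
    obtain ⟨hlo, hhi, hpos, hlt⟩ := hσmem N i hi hiN
    have hi' : |σ N i - (i : ℤ) * π| < π / 2 :=
      abs_lt.2 ⟨by push_cast; linarith, by push_cast; linarith⟩
    exact_mod_cast add_arcsin_div_eq_of_tan_eq i hi' (abs_lt.2 ⟨by linarith, hlt⟩)
      (hσeq N i hi hiN)
  obtain ⟨-, hhi, hpos, -⟩ := hσmem N j hj (by omega)
  obtain ⟨hlo', hhi', hpos', hlt'⟩ := hσmem N (j + 1) (by omega) (by omega)
  push_cast at hlo' hhi'
  calc |σ N (j + 1) - σ N j - π| ≤ π / √(c N ^ 2 - σ N (j + 1) ^ 2) :=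
        abs_sub_sub_pi_le_of_add_arcsin hpos.le (by linarith) hlt' <| by
          rw [hphase (j + 1) (by omega) (by omega), hphase j hj (by omega)]
          push_cast
          ring
    _ ≤ 2 * (N : ℝ) ^ ((1 : ℝ) / 2 - 3 * α / 2) :=
        pi_div_sqrt_le_two_mul_rpow (by linarith) hα1 <|
          pi_sq_div_two_mul_le_sq_sub_sq ((le_div_iff₀ pi_pos).1 (hc N).2) hpos' hhi' hjN hK h3
end

section
/- With the notation of the Pekeris eigenvalue problem (σ_j ∈ (π/2+(j-1)π, π/2+jπ) solving tan(y) = -y/√((n₁kdθ)²-y²), N = ⌊n₁kdθ/π⌋), for any α > 1/3 the second differences satisfy: sup over 1 ≤ j ≤ N - ⌊N^α⌋ - 2 of |σ_{j+2} - 2σ_{j+1} + σ_j| = O(N^{1-3α}) as N → ∞. -/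
open Real

lemma pekeris_key {C s : ℝ} (i : ℕ)
    (h1 : π / 2 + ((i : ℝ) - 1) * π < s) (h2 : s < π / 2 + (i : ℝ) * π)
    (h3 : 0 < s) (h4 : s < C)
    (heq : Real.tan s = - s / Real.sqrt (C ^ 2 - s ^ 2)) :
    (i : ℝ) * π - s = Real.arcsin (s / C) := by
  have hC : 0 < C := h3.trans h4
  have hx0 : 0 < s / C := div_pos h3 hC
  have hx1 : s / C < 1 := (div_lt_one hC).mpr h4
  have hsq : C ^ 2 - s ^ 2 = C ^ 2 * (1 - (s / C) ^ 2) := by field_simp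
  have hsqrt : Real.sqrt (C ^ 2 - s ^ 2) = C * Real.sqrt (1 - (s / C) ^ 2) := by
    rw [hsq, Real.sqrt_mul (sq_nonneg C), Real.sqrt_sq hC.le]
  have harg : s / C / Real.sqrt (1 - (s / C) ^ 2)
      = s / Real.sqrt (C ^ 2 - s ^ 2) := by
    rw [hsqrt, div_div]
  have htan : Real.tan ((i : ℝ) * π - s) = s / Real.sqrt (C ^ 2 - s ^ 2) := by
    have h : (i : ℝ) * π - s = -(s - (i : ℝ) * π) := by ring
    rw [h, Real.tan_neg, show s - (i:ℝ)*π = s - (i:ℕ)*π by norm_num,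
      Real.tan_periodic.sub_nat_mul_eq, heq]
    ring
  have ht1 : -(π / 2) < (i : ℝ) * π - s := by linarith
  have ht2 : (i : ℝ) * π - s < π / 2 := by linarith
  rw [Real.arcsin_eq_arctan ⟨by linarith, hx1⟩, harg, ← htan,
    Real.arctan_tan ht1 ht2]

lemma arcsin_mvt {a b : ℝ} (h0 : 0 ≤ a) (hab : a < b) (hb : b < 1) :
    ∃ ξ ∈ Set.Ioo a b,
      Real.arcsin b - Real.arcsin a = (b - a) / Real.sqrt (1 - ξ ^ 2) := by
  obtain ⟨ξ, hξ, he⟩ := exists_hasDerivAt_eq_slope Real.arcsin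
    (fun x => 1 / Real.sqrt (1 - x ^ 2)) hab
    Real.continuous_arcsin.continuousOn
    (fun x hx => Real.hasDerivAt_arcsin
      (by nlinarith [hx.1, hx.2] : x ≠ -1)
      ((hx.2.trans hb).ne))
  have hξ2 : ξ ^ 2 < 1 := by nlinarith [hξ.1, hξ.2]
  have hs : (0 : ℝ) < Real.sqrt (1 - ξ ^ 2) := Real.sqrt_pos.mpr (by linarith)
  refine ⟨ξ, hξ, ?_⟩
  have hba : b - a ≠ 0 := sub_ne_zero.mpr hab.ne'
  field_simp at he ⊢
  linarith [he]


set_option maxHeartbeats 1000000 in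
/-- Second differences of the Pekeris modal parameters: for any `α > 1/3`,
`sup_{1 ≤ j ≤ N-⌊N^α⌋-2} |σ_{j+2} - 2σ_{j+1} + σ_j| = O(N^{1-3α})` as `N → ∞`. -/
theorem stmt_2 (c : ℕ → ℝ) (σ : ℕ → ℕ → ℝ)
    (hc : ∀ N : ℕ, c N / π - 1 < (N : ℝ) ∧ (N : ℝ) ≤ c N / π)
    (hσmem : ∀ N : ℕ, ∀ j : ℕ, 1 ≤ j → j ≤ N →
      π / 2 + ((j : ℝ) - 1) * π < σ N j ∧ σ N j < π / 2 + (j : ℝ) * π ∧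
        0 < σ N j ∧ σ N j < c N)
    (hσeq : ∀ N : ℕ, ∀ j : ℕ, 1 ≤ j → j ≤ N →
      Real.tan (σ N j) = - σ N j / Real.sqrt ((c N) ^ 2 - (σ N j) ^ 2))
    (α : ℝ) (hα : 1 / 3 < α) :
    ∃ C : ℝ, ∃ N₀ : ℕ, ∀ N : ℕ, N₀ ≤ N → ∀ j : ℕ,
      1 ≤ j → j ≤ N - ⌊(N : ℝ) ^ α⌋₊ - 2 →
      |σ N (j + 2) - 2 * σ N (j + 1) + σ N j| ≤ C * (N : ℝ) ^ ((1 : ℝ) - 3 * α) := by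
  rcases le_or_gt 1 α with hα1 | hα1
  · -- for α ≥ 1 the range of j is empty once N ≥ 1
    refine ⟨0, 1, fun N hN j hj1 hj2 => absurd hj2 ?_⟩
    have hN1 : (1 : ℝ) ≤ (N : ℝ) := by exact_mod_cast hN
    have h : (N : ℝ) ≤ (N : ℝ) ^ α := by
      calc (N : ℝ) = (N : ℝ) ^ (1 : ℝ) := (Real.rpow_one _).symm
        _ ≤ (N : ℝ) ^ α := Real.rpow_le_rpow_of_exponent_le hN1 hα1
    have hfl : N ≤ ⌊(N : ℝ) ^ α⌋₊ := by
      calc N = ⌊((N : ℕ) : ℝ)⌋₊ := (Nat.floor_natCast N).symm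
        _ ≤ ⌊(N : ℝ) ^ α⌋₊ := Nat.floor_le_floor h
    omega
  · refine ⟨40, 27, fun N hN j hj1 hj2 => ?_⟩
    have hπ : (0:ℝ) < π := Real.pi_pos
    set m : ℕ := ⌊(N : ℝ) ^ α⌋₊ with hm_def
    have hm_lb0 : (N:ℝ)^α - 1 < (m:ℝ) := by rw [hm_def]; exact Nat.sub_one_lt_floor _
    clear_value m
    set n : ℝ := (N : ℝ) with hn_def
    have hn27 : (27:ℝ) ≤ n := by rw [hn_def]; exact_mod_cast hN
    have hjmn : ((j:ℝ) + (m:ℝ) + 2) ≤ n := by rw [hn_def]; exact_mod_cast (by omega : j + m + 2 ≤ N)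
    have hC0' : n * π ≤ c N := by
      have h := (hc N).2
      rw [le_div_iff₀ hπ] at h
      rw [hn_def]
      linarith only [h]
    clear_value n
    have hm_lb : n^α - 1 < (m:ℝ) := hm_lb0
    have hn0 : (0:ℝ) < n := by linarith only [hn27]
    have hn1 : (1:ℝ) ≤ n := by linarith only [hn27]
    have hjm : j + m + 2 ≤ N := by omega
    have hC0 : n * π ≤ c N := hC0'
    have hC0pos : (0:ℝ) < c N := lt_of_lt_of_le (mul_pos hn0 hπ) hC0
    -- memberships and key identities
    have hjN : j ≤ N := by omega
    have h1N : j + 1 ≤ N := by omega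
    have h2N : j + 2 ≤ N := by omega
    obtain ⟨ha1, ha2, ha3, ha4⟩ := hσmem N j hj1 hjN
    obtain ⟨hb1, hb2, hb3, hb4⟩ := hσmem N (j+1) (by omega) h1N
    obtain ⟨hd1, hd2, hd3, hd4⟩ := hσmem N (j+2) (by omega) h2N
    have Kj : (j:ℝ)*π - σ N j = Real.arcsin (σ N j / c N) :=
      pekeris_key j ha1 ha2 ha3 ha4 (hσeq N j hj1 hjN)
    have Kj1 : ((j+1:ℕ):ℝ)*π - σ N (j+1) = Real.arcsin (σ N (j+1) / c N) :=
      pekeris_key (j+1) hb1 hb2 hb3 hb4 (hσeq N (j+1) (by omega) h1N)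
    have Kj2 : ((j+2:ℕ):ℝ)*π - σ N (j+2) = Real.arcsin (σ N (j+2) / c N) :=
      pekeris_key (j+2) hd1 hd2 hd3 hd4 (hσeq N (j+2) (by omega) h2N)
    -- ordering of the σ's
    have hσ01 : σ N j < σ N (j+1) := by
      have h1 := hb1; push_cast at h1; linarith only [h1, ha2]
    have hσ12 : σ N (j+1) < σ N (j+2) := by
      have h1 := hd1; have h2 := hb2; push_cast at h1 h2; linarith only [h1, h2]
    set x0 := σ N j / c N with hx0_def
    set x1 := σ N (j+1) / c N with hx1_def
    set x2 := σ N (j+2) / c N with hx2_def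
    have hx00 : 0 < x0 := div_pos ha3 hC0pos
    have hx01 : x0 < x1 := (div_lt_div_iff_of_pos_right hC0pos).mpr hσ01
    have hx12 : x1 < x2 := (div_lt_div_iff_of_pos_right hC0pos).mpr hσ12
    have hx21 : x2 < 1 := (div_lt_one hC0pos).mpr hd4
    have hx2cN : x2 * c N = σ N (j+2) := div_mul_cancel₀ _ hC0pos.ne'
    clear_value x0 x1 x2
    have hx2pos : 0 < x2 := hx00.trans (hx01.trans hx12)
    -- mean value theorem
    obtain ⟨ξ₁, hξ₁, E₁⟩ := arcsin_mvt hx00.le hx01 (hx12.trans hx21)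
    obtain ⟨ξ₂, hξ₂, E₂⟩ := arcsin_mvt (hx00.le.trans hx01.le) hx12 hx21
    have hξ₁0 : 0 < ξ₁ := hx00.trans hξ₁.1
    have hξ12 : ξ₁ < ξ₂ := hξ₁.2.trans hξ₂.1
    have hξ2x : ξ₂ < x2 := hξ₂.2
    have hξ1x : ξ₁ < x2 := hξ12.trans hξ2x
    have hξsq1 : ξ₁^2 ≤ x2^2 := pow_le_pow_left₀ hξ₁0.le hξ1x.le 2
    have hξsq2 : ξ₂^2 ≤ x2^2 := pow_le_pow_left₀ (hξ₁0.trans hξ12).le hξ2x.le 2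
    set u := 1 - x2^2 with hu_def
    have hu : (0:ℝ) < u := by
      have h : x2^2 < 1 := by
        have := pow_lt_pow_left₀ hx21 hx2pos.le (two_ne_zero)
        simpa using this
      rw [hu_def]; linarith only [h]
    have huξ1 : u ≤ 1 - ξ₁^2 := by rw [hu_def]; linarith only [hξsq1]
    have huξ2 : u ≤ 1 - ξ₂^2 := by rw [hu_def]; linarith only [hξsq2]
    have hu1x : 1 - x2 ≤ u := by
      have h : x2*x2 ≤ x2*1 := mul_le_mul_of_nonneg_left hx21.le hx2pos.le
      rw [hu_def]; linarith only [h]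
    clear_value u
    set su := Real.sqrt u with hsu_def
    have hsu_pos : (0:ℝ) < su := Real.sqrt_pos.mpr hu
    have hsusu : su * su = u := Real.mul_self_sqrt hu.le
    have hsu_sqrt_lb : ∀ v : ℝ, v ≤ u → Real.sqrt v ≤ su := fun v hv => Real.sqrt_le_sqrt hv
    set B1 := Real.sqrt (1 - ξ₁^2) with hB1_def
    set B2 := Real.sqrt (1 - ξ₂^2) with hB2_def
    have hsuB1 : su ≤ B1 := by rw [hsu_def, hB1_def]; exact Real.sqrt_le_sqrt huξ1
    have hsuB2 : su ≤ B2 := by rw [hsu_def, hB2_def]; exact Real.sqrt_le_sqrt huξ2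
    have hB21 : B2 ≤ B1 := by
      rw [hB1_def, hB2_def]
      apply Real.sqrt_le_sqrt
      have h : ξ₁^2 ≤ ξ₂^2 := pow_le_pow_left₀ hξ₁0.le hξ12.le 2
      linarith only [h]
    have hB1sq : B1^2 = 1 - ξ₁^2 := Real.sq_sqrt (by linarith only [huξ1, hu])
    have hB2sq : B2^2 = 1 - ξ₂^2 := Real.sq_sqrt (by linarith only [huξ2, hu])
    clear_value su B1 B2
    have hB2pos : (0:ℝ) < B2 := hsu_pos.trans_le hsuB2
    have hB1pos : (0:ℝ) < B1 := hB2pos.trans_le hB21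
    set g1 := c N * B1 with hg1_def
    set g2 := c N * B2 with hg2_def
    have hg1pos : (0:ℝ) < g1 := mul_pos hC0pos hB1pos
    have hg2pos : (0:ℝ) < g2 := mul_pos hC0pos hB2pos
    have hg21 : g2 ≤ g1 := mul_le_mul_of_nonneg_left hB21 hC0pos.le
    clear_value g1 g2
    set δ₁ := σ N (j+1) - σ N j with hδ1_def
    set δ₂ := σ N (j+2) - σ N (j+1) with hδ2_def
    clear_value δ₁ δ₂
    -- the two modal equations
    have e1 : δ₁ * (1 + g1) = π * g1 := by
      have hE1' : π - δ₁ = δ₁ / g1 := by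
        have hxd : x1 - x0 = δ₁ / c N := by rw [hx1_def, hx0_def, hδ1_def, div_sub_div_same]
        calc π - δ₁ = (((j+1:ℕ):ℝ)*π - σ N (j+1)) - ((j:ℝ)*π - σ N j) := by
              rw [hδ1_def]; push_cast; ring
          _ = Real.arcsin x1 - Real.arcsin x0 := by rw [Kj1, Kj]
          _ = (x1 - x0)/B1 := E₁
          _ = (δ₁/c N)/B1 := by rw [hxd]
          _ = δ₁ / g1 := by rw [div_div, hg1_def]
      have h := (div_eq_iff hg1pos.ne').mp hE1'.symm
      linear_combination h
    have e2 : δ₂ * (1 + g2) = π * g2 := by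
      have hE2' : π - δ₂ = δ₂ / g2 := by
        have hxd : x2 - x1 = δ₂ / c N := by rw [hx2_def, hx1_def, hδ2_def, div_sub_div_same]
        calc π - δ₂ = (((j+2:ℕ):ℝ)*π - σ N (j+2)) - (((j+1:ℕ):ℝ)*π - σ N (j+1)) := by
              rw [hδ2_def]; push_cast; ring
          _ = Real.arcsin x2 - Real.arcsin x1 := by rw [Kj2, Kj1]
          _ = (x2 - x1)/B2 := E₂
          _ = (δ₂/c N)/B2 := by rw [hxd]
          _ = δ₂ / g2 := by rw [div_div, hg2_def]
      have h := (div_eq_iff hg2pos.ne').mp hE2'.symm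
      linear_combination h
    set D := σ N (j + 2) - 2 * σ N (j + 1) + σ N j with hD_def
    clear_value D
    have hDid : D * ((1+g1)*(1+g2)) = π * (g2 - g1) := by
      have hD' : D = δ₂ - δ₁ := by rw [hD_def, hδ1_def, hδ2_def]; ring
      rw [hD']
      linear_combination (1+g1)*e2 - (1+g2)*e1
    have hP : (0:ℝ) < (1+g1)*(1+g2) :=
      mul_pos (by linarith only [hg1pos]) (by linarith only [hg2pos])
    have Z1 : |D| * ((1+g1)*(1+g2)) = π * (g1 - g2) := by
      calc |D| * ((1+g1)*(1+g2)) = |D * ((1+g1)*(1+g2))| := by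
            rw [abs_mul, abs_of_pos hP]
        _ = |π * (g2 - g1)| := by rw [hDid]
        _ = π * (g1 - g2) := by
            rw [abs_mul, abs_of_pos hπ, abs_of_nonpos (by linarith only [hg21]), neg_sub]
    have Z2 : |D| ≤ π*(g1-g2)/(g1*g2) := by
      rw [le_div_iff₀ (mul_pos hg1pos hg2pos)]
      have hgg : g1*g2 ≤ (1+g1)*(1+g2) := by
        have h : (1+g1)*(1+g2) = 1+g1+g2+g1*g2 := by ring
        rw [h]; linarith only [hg1pos, hg2pos]
      have h2 := mul_le_mul_of_nonneg_left hgg (abs_nonneg D)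
      linarith only [h2, Z1]
    -- numerator bound
    have hξdiff : ξ₂ - ξ₁ ≤ 3*π/c N := by
      have h32 : σ N (j+2) - σ N j ≤ 3*π := by
        have h1 := hd2; have h2 := ha1; push_cast at h1 h2; linarith only [h1, h2]
      have hx20 : x2 - x0 ≤ 3*π/c N := by
        rw [hx2_def, hx0_def, div_sub_div_same]
        exact (div_le_div_iff_of_pos_right hC0pos).mpr h32
      linarith only [hξ₁.1, hξ₂.2, hx20]
    have hBB : B1 - B2 ≤ 2*(ξ₂-ξ₁)/su := by
      rw [le_div_iff₀ hsu_pos]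
      have h1 : (B1-B2)*su ≤ (B1-B2)*(B1+B2) := by
        apply mul_le_mul_of_nonneg_left _ (by linarith only [hB21])
        linarith only [hsuB2, hB1pos]
      have h2 : (B1-B2)*(B1+B2) = ξ₂^2 - ξ₁^2 := by linear_combination hB1sq - hB2sq
      have h3 : ξ₂^2 - ξ₁^2 ≤ 2*(ξ₂-ξ₁) := by
        calc ξ₂^2 - ξ₁^2 = (ξ₂-ξ₁)*(ξ₂+ξ₁) := by ring
          _ ≤ (ξ₂-ξ₁)*2 := by
              apply mul_le_mul_of_nonneg_left _ (by linarith only [hξ12])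
              linarith only [hξ2x, hξ1x, hx21]
          _ = 2*(ξ₂-ξ₁) := by ring
      linarith only [h1, h2, h3]
    have hnum : g1 - g2 ≤ 6*π/su := by
      have hgg : g1 - g2 = c N * (B1 - B2) := by rw [hg1_def, hg2_def]; ring
      rw [hgg]
      calc c N * (B1-B2) ≤ c N * (2*(ξ₂-ξ₁)/su) :=
            mul_le_mul_of_nonneg_left hBB hC0pos.le
        _ ≤ c N * (2*(3*π/c N)/su) := by
              apply mul_le_mul_of_nonneg_left _ hC0pos.le
              apply (div_le_div_iff_of_pos_right hsu_pos).mpr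
              linarith only [hξdiff]
        _ = 6*π/su := by
              rw [eq_div_iff hsu_pos.ne']
              field_simp
              ring
    have hden : c N^2 * u ≤ g1 * g2 := by
      have hgg : g1*g2 = c N^2*(B1*B2) := by rw [hg1_def, hg2_def]; ring
      rw [hgg]
      have hub : u ≤ B1*B2 := by
        calc u = su*su := hsusu.symm
          _ ≤ B1*B2 := mul_le_mul hsuB1 hsuB2 hsu_pos.le hB1pos.le
      exact mul_le_mul_of_nonneg_left hub (sq_nonneg _)
    have Z3 : π*(g1-g2)/(g1*g2) ≤ π*(6*π/su)/(c N^2*u) := by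
      apply div_le_div₀ (mul_nonneg hπ.le (div_nonneg (by positivity) hsu_pos.le)) _
        (mul_pos (pow_pos hC0pos 2) hu) hden
      exact mul_le_mul_of_nonneg_left hnum hπ.le
    -- lower bound on u
    have hjm' : ((j:ℝ)+2) ≤ n - m := by linarith only [hjmn]
    have hx2n : x2 * n < 1/2 + (n - (m:ℝ)) := by
      have h1 : x2 * (n*π) ≤ x2 * c N := mul_le_mul_of_nonneg_left hC0 hx2pos.le
      have h2 : σ N (j+2) < π/2 + ((j:ℝ)+2)*π := by
        have h := hd2; push_cast at h; linarith only [h]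
      have h3 : ((j:ℝ)+2)*π ≤ (n - (m:ℝ))*π := mul_le_mul_of_nonneg_right hjm' hπ.le
      have h4 : (x2*n)*π < (1/2 + (n - (m:ℝ)))*π := by
        have e5 : x2 * (n*π) = (x2*n)*π := by ring
        have e6 : π/2 + (n - (m:ℝ))*π = (1/2 + (n - (m:ℝ)))*π := by ring
        rw [e5] at h1
        rw [e6.symm] at *
        linarith only [h1, h2, h3, hx2cN, e6]
      exact (mul_lt_mul_iff_of_pos_right hπ).mp h4
    have h1x : ((m:ℝ) - 1/2)/n < 1 - x2 := by
      rw [div_lt_iff₀ hn0]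
      have h : (1-x2)*n = n - x2*n := by ring
      rw [h]; linarith only [hx2n]
    -- floor bounds
    have w3 : (3:ℝ) ≤ n^α := by
      have h27 : ((27:ℝ))^α ≤ n^α := Real.rpow_le_rpow (by norm_num) hn27 (by linarith only [hα])
      have h3 : (3:ℝ) ≤ (27:ℝ)^α := by
        have he : (3:ℝ) = (27:ℝ)^((1:ℝ)/3) := by
          rw [show (27:ℝ) = 3^(3:ℕ) by norm_num, ← Real.rpow_natCast 3 3,
            ← Real.rpow_mul (by norm_num : (0:ℝ) ≤ 3)]
          norm_num
        rw [he]
        exact Real.rpow_le_rpow_of_exponent_le (by norm_num) hα.le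
      linarith only [h27, h3]
    have hu_lb : n^(α-1)/2 ≤ u := by
      have hna : n^(α-1) = n^α/n := by rw [Real.rpow_sub hn0, Real.rpow_one]
      have h1 : n^α/2 ≤ (m:ℝ) - 1/2 := by linarith only [hm_lb, w3]
      have h2 : n^α/n/2 ≤ ((m:ℝ)-1/2)/n := by
        rw [div_right_comm]
        exact (div_le_div_iff_of_pos_right hn0).mpr (by linarith only [h1])
      rw [hna]
      linarith only [h2, h1x, hu1x]
    have hsu_lb : n^((α-1)/2)/2 ≤ su := by
      have h1 : Real.sqrt (n^(α-1)/2) ≤ su := hsu_sqrt_lb _ hu_lb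
      have h2 : Real.sqrt (n^(α-1)/2) = Real.sqrt (n^(α-1))/Real.sqrt 2 :=
        Real.sqrt_div (Real.rpow_nonneg hn0.le _) 2
      have h3 : Real.sqrt (n^(α-1)) = n^((α-1)/2) := by
        rw [Real.sqrt_eq_rpow, ← Real.rpow_mul hn0.le]
        congr 1; ring
      have hs2 : Real.sqrt 2 ≤ 2 := by
        have h4 : Real.sqrt 4 = 2 := by
          rw [show (4:ℝ) = 2^2 by norm_num, Real.sqrt_sq (by norm_num : (0:ℝ) ≤ 2)]
        calc Real.sqrt 2 ≤ Real.sqrt 4 := Real.sqrt_le_sqrt (by norm_num)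
          _ = 2 := h4
      have h4 : n^((α-1)/2)/2 ≤ n^((α-1)/2)/Real.sqrt 2 := by
        apply div_le_div_of_nonneg_left (Real.rpow_nonneg hn0.le _) (Real.sqrt_pos.mpr (by norm_num)) hs2
      calc n^((α-1)/2)/2 ≤ n^((α-1)/2)/Real.sqrt 2 := h4
        _ = Real.sqrt (n^(α-1)/2) := by rw [h2, h3]
        _ ≤ su := h1
    -- final assembly
    have hc2 : π^2*n^2 ≤ c N^2 := by
      have h := pow_le_pow_left₀ (mul_nonneg hn0.le hπ.le) hC0 2
      calc π^2*n^2 = (n*π)^2 := by ring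
        _ ≤ c N^2 := h
    have hrw2 : (n:ℝ)^2 = n^((2:ℝ)) := by
      rw [← Real.rpow_natCast n 2]; norm_num
    have hiden : n^((1:ℝ)-3*α)*n^((2:ℝ))*(n^(α-1))*(n^((α-1)/2)) = n^((3-3*α)/2) := by
      rw [← Real.rpow_add hn0, ← Real.rpow_add hn0, ← Real.rpow_add hn0]
      congr 1; ring
    have hone : (1:ℝ) ≤ n^((3-3*α)/2) := Real.one_le_rpow hn1 (by linarith only [hα1])
    have Z4 : π*(6*π/su)/(c N^2*u) ≤ 40*n^((1:ℝ)-3*α) := by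
      rw [div_le_iff₀ (mul_pos (pow_pos hC0pos 2) hu),
        show π*(6*π/su) = 6*π^2/su by ring, div_le_iff₀ hsu_pos]
      have hprod : π^2*n^2*(n^(α-1)/2)*(n^((α-1)/2)/2) ≤ c N^2*u*su := by
        have t1 : π^2*n^2*(n^(α-1)/2) ≤ c N^2*u :=
          mul_le_mul hc2 hu_lb (div_nonneg (Real.rpow_nonneg hn0.le _) (by norm_num))
            (sq_nonneg _)
        exact mul_le_mul t1 hsu_lb
          (div_nonneg (Real.rpow_nonneg hn0.le _) (by norm_num))
          (mul_nonneg (sq_nonneg _) hu.le)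
      have hrp : (0:ℝ) ≤ n^((1:ℝ)-3*α) := Real.rpow_nonneg hn0.le _
      have hq : 10*π^2*(n^((3-3*α)/2))
          = 40*(π^2*n^2*(n^(α-1)/2)*(n^((α-1)/2)/2))*n^((1:ℝ)-3*α) := by
        rw [← hiden, hrw2]; ring
      have h6 : 6*π^2 ≤ 10*π^2*(n^((3-3*α)/2)) := by
        have h := mul_le_mul_of_nonneg_left hone (show (0:ℝ) ≤ 10*π^2 by positivity)
        have hsq : (0:ℝ) ≤ π^2 := sq_nonneg π
        linarith only [h, hsq]
      calc 6*π^2 ≤ 10*π^2*(n^((3-3*α)/2)) := h6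
        _ = 40*(π^2*n^2*(n^(α-1)/2)*(n^((α-1)/2)/2))*n^((1:ℝ)-3*α) := hq
        _ ≤ 40*(c N^2*u*su)*n^((1:ℝ)-3*α) := by
            apply mul_le_mul_of_nonneg_right _ hrp
            exact mul_le_mul_of_nonneg_left hprod (by norm_num)
        _ = 40*n^((1:ℝ)-3*α)*(c N^2*u)*su := by ring
    calc |D| ≤ π*(g1-g2)/(g1*g2) := Z2
      _ ≤ π*(6*π/su)/(c N^2*u) := Z3
      _ ≤ 40*n^((1:ℝ)-3*α) := Z4
end

section
/- Let σ_j be the Pekeris modal parameters as above. For any α ∈ (0,1), sup over 1 ≤ j ≤ ⌊N^α⌋ of |σ_j - jπ| = O(N^{α-1}) as N → ∞. -/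
/-!
Write `δ = σ_j - jπ`. The bracketing interval gives `|δ| < π/2`, and `tan` is `π`-periodic, so
`|δ| ≤ |tan δ| = |tan σ_j| = σ_j / √(c² - σ_j²)`. For `j ≤ N^α` we have `σ_j ≲ 2πN^α`, which is at
most `c/2` once `N^(α-1) < 1/4`; then the square root is at least `c/2 ≥ πN/2`, giving
`|δ| ≤ 4N^(α-1)`. When `N^(α-1) ≥ 1/4` the trivial bound `|δ| < π/2` is already of that order.
-/

open Real

namespace Real

theorem abs_le_abs_tan {x : ℝ} (hx : |x| < π / 2) : |x| ≤ |tan x| := by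
  rcases le_total 0 x with h | h
  · rw [abs_of_nonneg h] at hx ⊢
    exact (le_tan h hx).trans (le_abs_self _)
  · rw [abs_of_nonpos h] at hx ⊢
    exact (tan_neg x ▸ le_tan (neg_nonneg.mpr h) hx).trans (neg_le_abs _)

theorem abs_sub_int_mul_pi_le_abs_tan {x : ℝ} {k : ℤ} (hx : |x - k * π| < π / 2) :
    |x - k * π| ≤ |tan x| :=
  tan_sub_int_mul_pi x k ▸ abs_le_abs_tan hx

end Real

theorem div_sqrt_sq_sub_sq_le {s c : ℝ} (hs : 0 ≤ s) (hc : 0 < c) (hsc : 2 * s ≤ c) :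
    s / √(c ^ 2 - s ^ 2) ≤ 2 * s / c := by
  have hroot : c / 2 ≤ √(c ^ 2 - s ^ 2) :=
    Real.le_sqrt_of_sq_le (by nlinarith)
  calc s / √(c ^ 2 - s ^ 2) ≤ s / (c / 2) := div_le_div_of_nonneg_left hs (by positivity) hroot
    _ = 2 * s / c := by field_simp

theorem pekeris_abs_sub_nat_mul_pi_le {s c : ℝ} {j : ℕ}
    (hlo : π / 2 + ((j : ℝ) - 1) * π < s) (hhi : s < π / 2 + (j : ℝ) * π) (hs : 0 < s)
    (htan : tan s = -s / √(c ^ 2 - s ^ 2)) (hc : 0 < c) (hsc : 2 * s ≤ c) :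
    |s - j * π| ≤ 2 * s / c := by
  have hnear : |s - ((j : ℤ) : ℝ) * π| < π / 2 := by
    push_cast; rw [abs_lt]; constructor <;> linarith
  calc |s - j * π| = |s - ((j : ℤ) : ℝ) * π| := by push_cast; rfl
    _ ≤ |tan s| := Real.abs_sub_int_mul_pi_le_abs_tan hnear
    _ = s / √(c ^ 2 - s ^ 2) := by rw [htan, neg_div, abs_neg, abs_of_nonneg (by positivity)]
    _ ≤ 2 * s / c := div_sqrt_sq_sub_sq_le hs.le hc hsc

theorem stmt_3_general (c : ℕ → ℝ) (σ : ℕ → ℕ → ℝ)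
    (hc : ∀ N : ℕ, c N / π - 1 < (N : ℝ) ∧ (N : ℝ) ≤ c N / π)
    (hσmem : ∀ N : ℕ, ∀ j : ℕ, 1 ≤ j → j ≤ N →
      π / 2 + ((j : ℝ) - 1) * π < σ N j ∧ σ N j < π / 2 + (j : ℝ) * π ∧
        0 < σ N j ∧ σ N j < c N)
    (hσeq : ∀ N : ℕ, ∀ j : ℕ, 1 ≤ j → j ≤ N →
      Real.tan (σ N j) = - σ N j / Real.sqrt ((c N) ^ 2 - (σ N j) ^ 2))
    (α : ℝ) :
    ∃ C : ℝ, ∃ N₀ : ℕ, ∀ N : ℕ, N₀ ≤ N → ∀ j : ℕ,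
      1 ≤ j → j ≤ ⌊(N : ℝ) ^ α⌋₊ → j ≤ N →
      |σ N j - (j : ℝ) * π| ≤ C * (N : ℝ) ^ (α - 1) := by
  refine ⟨2 * π, 0, fun N _ j hj1 hjα hjN => ?_⟩
  obtain ⟨hlo, hhi, hpos, -⟩ := hσmem N j hj1 hjN
  have hj : (1 : ℝ) ≤ j := by exact_mod_cast hj1
  have hN : (1 : ℝ) ≤ N := by exact_mod_cast hj1.trans hjN
  have hjNα : (j : ℝ) ≤ (N : ℝ) ^ α :=
    (Nat.cast_le.mpr hjα).trans (Nat.floor_le (by positivity))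
  rcases le_or_gt (1 / 4) ((N : ℝ) ^ (α - 1)) with hlarge | hsmall
  · have hnear : |σ N j - j * π| < π / 2 := by rw [abs_lt]; constructor <;> linarith
    nlinarith [pi_pos]
  · have hNα : (N : ℝ) ^ α = (N : ℝ) ^ (α - 1) * N := by
      rw [rpow_sub_one (by positivity), div_mul_cancel₀ _ (by positivity)]
    have hσle : σ N j ≤ 2 * π * (N : ℝ) ^ α := by nlinarith [pi_pos]
    have hcN : π * N ≤ c N := (le_div_iff₀' pi_pos).mp (hc N).2
    have hNα_lt : (N : ℝ) ^ α < N / 4 := by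
      rw [hNα]; nlinarith
    have hσc : 2 * σ N j ≤ c N := by nlinarith [pi_pos]
    calc |σ N j - j * π| ≤ 2 * σ N j / c N :=
          pekeris_abs_sub_nat_mul_pi_le hlo hhi hpos (hσeq N j hj1 hjN) (by linarith) hσc
      _ ≤ 2 * (2 * π * (N : ℝ) ^ α) / (π * N) :=
          div_le_div₀ (by positivity) (by linarith) (by positivity) hcN
      _ = 4 * (N : ℝ) ^ (α - 1) := by rw [hNα]; field_simp; ring
      _ ≤ 2 * π * (N : ℝ) ^ (α - 1) := by nlinarith [pi_gt_three]

/-- Low-index Pekeris modal parameters: for any `α ∈ (0,1)`,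
`sup_{1 ≤ j ≤ ⌊N^α⌋} |σ_j - jπ| = O(N^{α-1})` as `N → ∞`. -/
theorem stmt_3 (c : ℕ → ℝ) (σ : ℕ → ℕ → ℝ)
    (hc : ∀ N : ℕ, c N / π - 1 < (N : ℝ) ∧ (N : ℝ) ≤ c N / π)
    (hσmem : ∀ N : ℕ, ∀ j : ℕ, 1 ≤ j → j ≤ N →
      π / 2 + ((j : ℝ) - 1) * π < σ N j ∧ σ N j < π / 2 + (j : ℝ) * π ∧
        0 < σ N j ∧ σ N j < c N)
    (hσeq : ∀ N : ℕ, ∀ j : ℕ, 1 ≤ j → j ≤ N →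
      Real.tan (σ N j) = - σ N j / Real.sqrt ((c N) ^ 2 - (σ N j) ^ 2))
    (α : ℝ) (hα0 : 0 < α) (hα1 : α < 1) :
    ∃ C : ℝ, ∃ N₀ : ℕ, ∀ N : ℕ, N₀ ≤ N → ∀ j : ℕ,
      1 ≤ j → j ≤ ⌊(N : ℝ) ^ α⌋₊ → j ≤ N →
      |σ N j - (j : ℝ) * π| ≤ C * (N : ℝ) ^ (α - 1) :=
  stmt_3_general c σ hc hσmem hσeq α
end

section
/- Define A_j² = (2/d) / (1 + sin²(σ_j)/ζ_j - sin(2σ_j)/(2σ_j)) where ζ_j = √((n₁kdθ)² - σ_j²)·(chosen positive), in the Pekeris setting with σ_j solving the modal equation. Then for any α ∈ (1/2, 1), sup over 1 ≤ j ≤ N - ⌊N^α⌋ of |A_j² - 2/d| = O(N^{α-1}) as N → ∞. -/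
open Real

/-!
The modal equation `tan σ = -σ/ζ` gives `sin (2σ)/(2σ) = -cos² σ/ζ`, so the denominator collapses
to `1 + 1/ζ` and `A_j² - 2/d = -(2/d)/(ζ + 1)`. Since `c ≥ Nπ` and `σ_j < π/2 + jπ` with
`j ≤ N - ⌊N^α⌋`, both `c - σ_j ≳ N^α` and `c + σ_j ≳ N`, hence `ζ² = (c - σ_j)(c + σ_j) ≳ N^{1+α}`,
which exceeds `N^{2-2α}` as soon as `α ≥ 1/3`.
-/

theorem sin_two_mul_div_eq_of_tan_eq {s ζ : ℝ} (hs : s ≠ 0) (hζ : ζ ≠ 0)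
    (h : tan s = -s / ζ) : sin (2 * s) / (2 * s) = -cos s ^ 2 / ζ := by
  have hcos : cos s ≠ 0 := by
    intro hcos
    rw [tan_eq_sin_div_cos, hcos, div_zero, eq_comm, div_eq_zero_iff, neg_eq_zero] at h
    exact h.elim hs hζ
  rw [sin_two_mul, ← tan_mul_cos hcos, h]
  field_simp

theorem one_add_sin_sq_div_sub_sin_two_mul_div_of_tan_eq {s ζ : ℝ} (hs : s ≠ 0) (hζ : ζ ≠ 0)
    (h : tan s = -s / ζ) : 1 + sin s ^ 2 / ζ - sin (2 * s) / (2 * s) = 1 + 1 / ζ := by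
  rw [sin_two_mul_div_eq_of_tan_eq hs hζ h, neg_div, sub_neg_eq_add, add_assoc, ← add_div,
    sin_sq_add_cos_sq]

theorem abs_div_one_add_inv_sub_self (a : ℝ) {ζ : ℝ} (hζ : 0 < ζ) :
    |a / (1 + 1 / ζ) - a| = |a| / (ζ + 1) := by
  rw [show a / (1 + 1 / ζ) - a = -(a / (ζ + 1)) by field_simp; ring, abs_neg, abs_div,
    abs_of_pos (by linarith : 0 < ζ + 1)]

theorem two_le_rpow_of_four_le {x α : ℝ} (hx : 4 ≤ x) (hα : 1 / 2 ≤ α) : 2 ≤ x ^ α :=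
  calc (2 : ℝ) = √4 := by rw [show (4 : ℝ) = 2 ^ 2 by norm_num, sqrt_sq zero_le_two]
    _ ≤ √x := sqrt_le_sqrt hx
    _ = x ^ (1 / 2 : ℝ) := sqrt_eq_rpow x
    _ ≤ x ^ α := rpow_le_rpow_of_exponent_le (by linarith) hα

theorem sq_rpow_one_sub_le_mul_rpow {x α : ℝ} (hx : 1 ≤ x) (hα : 1 / 3 ≤ α) :
    (x ^ (1 - α)) ^ 2 ≤ x * x ^ α := by
  have hx0 : 0 < x := by linarith
  calc (x ^ (1 - α)) ^ 2 = x ^ ((1 - α) + (1 - α)) := by rw [sq, rpow_add hx0]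
    _ ≤ x ^ (1 + α) := rpow_le_rpow_of_exponent_le hx (by linarith)
    _ = x * x ^ α := by rw [rpow_add hx0, rpow_one]

theorem rpow_one_sub_le_sqrt_sq_sub_sq {x α c s j : ℝ} (hx : 4 ≤ x) (hα : 1 / 2 ≤ α)
    (hjx : j + ⌊x ^ α⌋₊ ≤ x) (hc : x * π ≤ c) (hs0 : 0 ≤ s) (hs : s < π / 2 + j * π) :
    x ^ (1 - α) ≤ √(c ^ 2 - s ^ 2) := by
  have hxα := two_le_rpow_of_four_le hx hα
  have hfloor := Nat.sub_one_lt_floor (x ^ α)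
  have hdiff : x ^ α / 4 * π ≤ c - s := by
    have : x ^ α / 4 * π ≤ (x - j - 1 / 2) * π :=
      mul_le_mul_of_nonneg_right (by linarith) pi_pos.le
    linarith
  have hsum : x * π ≤ c + s := by linarith
  have hdiff0 : 0 ≤ c - s := le_trans (by positivity) hdiff
  have hpi : 4 ≤ π * π := by nlinarith [pi_gt_three]
  have hxxα : 0 ≤ x * x ^ α := by positivity
  rw [le_sqrt' (by positivity)]
  calc (x ^ (1 - α)) ^ 2 ≤ x * x ^ α := sq_rpow_one_sub_le_mul_rpow (by linarith) (by linarith)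
    _ ≤ (x ^ α / 4 * π) * (x * π) := by nlinarith
    _ ≤ (c - s) * (c + s) := mul_le_mul hdiff hsum (by positivity) hdiff0
    _ = c ^ 2 - s ^ 2 := by ring

theorem stmt_4_general (d : ℝ) (c : ℕ → ℝ) (σ : ℕ → ℕ → ℝ)
    (hc : ∀ N : ℕ, c N / π - 1 < (N : ℝ) ∧ (N : ℝ) ≤ c N / π)
    (hσmem : ∀ N : ℕ, ∀ j : ℕ, 1 ≤ j → j ≤ N →
      π / 2 + ((j : ℝ) - 1) * π < σ N j ∧ σ N j < π / 2 + (j : ℝ) * π ∧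
        0 < σ N j ∧ σ N j < c N)
    (hσeq : ∀ N : ℕ, ∀ j : ℕ, 1 ≤ j → j ≤ N →
      Real.tan (σ N j) = - σ N j / Real.sqrt ((c N) ^ 2 - (σ N j) ^ 2))
    (α : ℝ) (hα0 : 1 / 2 < α) :
    ∃ C : ℝ, ∃ N₀ : ℕ, ∀ N : ℕ, N₀ ≤ N → ∀ j : ℕ,
      1 ≤ j → j ≤ N - ⌊(N : ℝ) ^ α⌋₊ →
      |(2 / d) / (1 + Real.sin (σ N j) ^ 2 / Real.sqrt ((c N) ^ 2 - (σ N j) ^ 2)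
          - Real.sin (2 * σ N j) / (2 * σ N j)) - 2 / d|
        ≤ C * (N : ℝ) ^ (α - 1) := by
  refine ⟨|2 / d|, 4, fun N hN j hj1 hj => ?_⟩
  have hjN : j ≤ N := hj.trans (Nat.sub_le _ _)
  obtain ⟨-, hs_lt, hs0, hsc⟩ := hσmem N j hj1 hjN
  have hζ : 0 < √(c N ^ 2 - σ N j ^ 2) := sqrt_pos.2 (by nlinarith)
  have hζ_ge : (N : ℝ) ^ (1 - α) ≤ √(c N ^ 2 - σ N j ^ 2) :=
    rpow_one_sub_le_sqrt_sq_sub_sq (by exact_mod_cast hN) hα0.le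
      (by exact_mod_cast (by omega : j + ⌊(N : ℝ) ^ α⌋₊ ≤ N))
      ((le_div_iff₀ pi_pos).1 (hc N).2) hs0.le hs_lt
  rw [one_add_sin_sq_div_sub_sin_two_mul_div_of_tan_eq hs0.ne' hζ.ne' (hσeq N j hj1 hjN),
    abs_div_one_add_inv_sub_self _ hζ]
  calc |2 / d| / (√(c N ^ 2 - σ N j ^ 2) + 1) ≤ |2 / d| / (N : ℝ) ^ (1 - α) :=
        div_le_div_of_nonneg_left (abs_nonneg _) (by positivity) (by linarith)
    _ = |2 / d| * (N : ℝ) ^ (α - 1) := by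
        rw [div_eq_mul_inv, ← rpow_neg (Nat.cast_nonneg _), neg_sub]

/-- Normalization constants of the Pekeris propagating modes:
`A_j² = (2/d)/(1 + sin²σ_j/ζ_j - sin(2σ_j)/(2σ_j))` with `ζ_j = √(c² - σ_j²)` satisfies,
for any `α ∈ (1/2,1)`, `sup_{1 ≤ j ≤ N-⌊N^α⌋} |A_j² - 2/d| = O(N^{α-1})` as `N → ∞`. -/
theorem stmt_4 (d : ℝ) (hd : 0 < d) (c : ℕ → ℝ) (σ : ℕ → ℕ → ℝ)
    (hc : ∀ N : ℕ, c N / π - 1 < (N : ℝ) ∧ (N : ℝ) ≤ c N / π)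
    (hσmem : ∀ N : ℕ, ∀ j : ℕ, 1 ≤ j → j ≤ N →
      π / 2 + ((j : ℝ) - 1) * π < σ N j ∧ σ N j < π / 2 + (j : ℝ) * π ∧
        0 < σ N j ∧ σ N j < c N)
    (hσeq : ∀ N : ℕ, ∀ j : ℕ, 1 ≤ j → j ≤ N →
      Real.tan (σ N j) = - σ N j / Real.sqrt ((c N) ^ 2 - (σ N j) ^ 2))
    (α : ℝ) (hα0 : 1 / 2 < α) (hα1 : α < 1) :
    ∃ C : ℝ, ∃ N₀ : ℕ, ∀ N : ℕ, N₀ ≤ N → ∀ j : ℕ,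
      1 ≤ j → j ≤ N - ⌊(N : ℝ) ^ α⌋₊ →
      |(2 / d) / (1 + Real.sin (σ N j) ^ 2 / Real.sqrt ((c N) ^ 2 - (σ N j) ^ 2)
          - Real.sin (2 * σ N j) / (2 * σ N j)) - 2 / d|
        ≤ C * (N : ℝ) ^ (α - 1) :=
  stmt_4_general d c σ hc hσmem hσeq α hα0
end

section
/- Let N ≥ 2, Γ a real symmetric irreducible N×N matrix with nonnegative off-diagonal entries and zero row sums, and Λ_d = diag(Λ₁,…,Λ_N) with all Λ_j ≥ 0 and at least one Λ_{j₀} > 0. Define Λ_∞ = inf over X ∈ ℝ^N with X_j ≥ 0 for all j and ‖X‖₂ = 1 of ⟨(-Γ + Λ_d)X, X⟩. Then Λ_∞ > 0. -/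
/-! With zero row sums and symmetry, `⟨-ΓX, X⟩` is the Dirichlet form
`½ ∑ Γ_jl (X_j - X_l)²`, which is nonnegative and, by irreducibility, vanishes only on
constant vectors; `⟨Λ_d X, X⟩ ≥ 0` vanishes on a constant vector only if it is zero, since
`Λ_{j₀} > 0`. So the quadratic form is positive on the whole unit sphere, and by compactness its
minimum there is a positive lower bound for the infimum over the nonnegative part. -/

open Finset

variable {ι : Type*}

lemma dirichletForm_term_nonneg {Γ : Matrix ι ι ℝ} (hoff : ∀ j l, j ≠ l → 0 ≤ Γ j l)
    (X : ι → ℝ) (j l : ι) : 0 ≤ Γ j l * (X j - X l) ^ 2 := by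
  rcases eq_or_ne j l with rfl | hjl
  · simp
  · exact mul_nonneg (hoff j l hjl) (sq_nonneg _)

variable [Fintype ι]

def dirichletForm (Γ : Matrix ι ι ℝ) (X : ι → ℝ) : ℝ :=
  ∑ j, ∑ l, Γ j l * (X j - X l) ^ 2

section DirichletForm

variable {Γ : Matrix ι ι ℝ} (X : ι → ℝ)

lemma neg_quadForm_eq_half_dirichletForm (hsym : Γ.IsSymm) (hrow : ∀ j, ∑ l, Γ j l = 0) :
    ∑ j, ∑ l, (-Γ j l) * X j * X l = dirichletForm Γ X / 2 := by
  have hrows : ∑ j, ∑ l, Γ j l * X j ^ 2 = 0 :=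
    sum_eq_zero fun j _ => by rw [← sum_mul, hrow, zero_mul]
  have hcols : ∑ j, ∑ l, Γ j l * X l ^ 2 = 0 := by
    rw [sum_comm]
    refine sum_eq_zero fun l _ => ?_
    simp_rw [hsym.apply l]
    rw [← sum_mul, hrow, zero_mul]
  have hexpand : dirichletForm Γ X = ∑ j, ∑ l, Γ j l * X j ^ 2 + ∑ j, ∑ l, Γ j l * X l ^ 2
      + 2 * ∑ j, ∑ l, (-Γ j l) * X j * X l := by
    simp only [dirichletForm, mul_sum, ← sum_add_distrib]
    exact sum_congr rfl fun j _ => sum_congr rfl fun l _ => by ring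
  linarith

lemma dirichletForm_nonneg (hoff : ∀ j l, j ≠ l → 0 ≤ Γ j l) : 0 ≤ dirichletForm Γ X :=
  sum_nonneg fun j _ => sum_nonneg fun l _ => dirichletForm_term_nonneg hoff X j l

lemma eq_of_dirichletForm_eq_zero (hoff : ∀ j l, j ≠ l → 0 ≤ Γ j l)
    (hX : dirichletForm Γ X = 0) {j l : ι} (hjl : Γ j l ≠ 0) : X j = X l := by
  have hrow := (sum_eq_zero_iff_of_nonneg fun j _ =>
    sum_nonneg fun l _ => dirichletForm_term_nonneg hoff X j l).mp hX j (mem_univ _)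
  have hterm := (sum_eq_zero_iff_of_nonneg fun l _ =>
    dirichletForm_term_nonneg hoff X j l).mp hrow l (mem_univ _)
  have hsq : (X j - X l) ^ 2 = 0 := (mul_eq_zero.mp hterm).resolve_left hjl
  exact sub_eq_zero.mp (pow_eq_zero_iff two_ne_zero |>.mp hsq)

lemma eq_const_of_dirichletForm_eq_zero (hoff : ∀ j l, j ≠ l → 0 ≤ Γ j l)
    (hirr : ∀ S : Set ι, S.Nonempty → Sᶜ.Nonempty → ∃ j ∈ S, ∃ l ∈ Sᶜ, Γ j l ≠ 0)
    (hX : dirichletForm Γ X = 0) (j₀ j : ι) : X j = X j₀ := by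
  by_contra hj
  obtain ⟨k, hk, l, hl, hkl⟩ := hirr {i | X i = X j₀} ⟨j₀, rfl⟩ ⟨j, hj⟩
  exact hl ((eq_of_dirichletForm_eq_zero X hoff hX hkl).symm.trans hk)

end DirichletForm

lemma quadForm_pos {Γ : Matrix ι ι ℝ} {Λ : ι → ℝ} (hsym : Γ.IsSymm)
    (hoff : ∀ j l, j ≠ l → 0 ≤ Γ j l) (hrow : ∀ j, ∑ l, Γ j l = 0)
    (hirr : ∀ S : Set ι, S.Nonempty → Sᶜ.Nonempty → ∃ j ∈ S, ∃ l ∈ Sᶜ, Γ j l ≠ 0)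
    (hΛ : ∀ j, 0 ≤ Λ j) {j₀ : ι} (hj₀ : 0 < Λ j₀) {X : ι → ℝ} (hX : X ≠ 0) :
    0 < (∑ j, ∑ l, (-Γ j l) * X j * X l) + ∑ j, Λ j * X j ^ 2 := by
  rw [neg_quadForm_eq_half_dirichletForm X hsym hrow]
  have hD := dirichletForm_nonneg X hoff
  have hΛterm : ∀ j ∈ univ, 0 ≤ Λ j * X j ^ 2 := fun j _ => mul_nonneg (hΛ j) (sq_nonneg _)
  have hL := sum_nonneg hΛterm
  by_contra! hle
  have hX₀ : X j₀ = 0 := by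
    have h := (sum_eq_zero_iff_of_nonneg hΛterm).mp (by linarith) j₀ (mem_univ _)
    exact pow_eq_zero_iff two_ne_zero |>.mp ((mul_eq_zero.mp h).resolve_left hj₀.ne')
  refine hX (funext fun j => ?_)
  rw [eq_const_of_dirichletForm_eq_zero X hoff hirr (by linarith) j₀ j, hX₀, Pi.zero_apply]

lemma isCompact_sum_sq_eq_one : IsCompact {X : ι → ℝ | ∑ j, X j ^ 2 = 1} := by
  refine Metric.isCompact_of_isClosed_isBounded (isClosed_eq (by fun_prop) continuous_const)
    ((Metric.isBounded_closedBall (x := 0) (r := 1)).subset fun X hX => ?_)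
  rw [mem_closedBall_zero_iff, pi_norm_le_iff_of_nonneg zero_le_one]
  intro j
  rw [Real.norm_eq_abs, ← sq_le_one_iff_abs_le_one, ← (hX : ∑ j, X j ^ 2 = 1)]
  exact single_le_sum (fun i _ => sq_nonneg (X i)) (mem_univ j)

theorem stmt_8_general (N : ℕ) (Γ : Matrix (Fin N) (Fin N) ℝ) (Λ : Fin N → ℝ)
    (hsym : Γ.IsSymm)
    (hoff : ∀ j l, j ≠ l → 0 ≤ Γ j l)
    (hrow : ∀ j, ∑ l, Γ j l = 0)
    (hirr : ∀ S : Set (Fin N), S.Nonempty → Sᶜ.Nonempty →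
      ∃ j ∈ S, ∃ l ∈ Sᶜ, Γ j l ≠ 0)
    (hΛ : ∀ j, 0 ≤ Λ j) (j₀ : Fin N) (hj₀ : 0 < Λ j₀) :
    0 < sInf { r : ℝ | ∃ X : Fin N → ℝ, (∀ j, 0 ≤ X j) ∧ (∑ j, X j ^ 2 = 1) ∧
      r = (∑ j, ∑ l, (-Γ j l) * X j * X l) + ∑ j, Λ j * X j ^ 2 } := by
  set e : Fin N → ℝ := Pi.single j₀ 1
  have he : ∑ j, e j ^ 2 = 1 := by simp [e, Pi.single_apply]
  obtain ⟨X₀, hX₀, hmin⟩ := isCompact_sum_sq_eq_one.exists_isMinOn ⟨e, he⟩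
    (f := fun X : Fin N → ℝ => (∑ j, ∑ l, (-Γ j l) * X j * X l) + ∑ j, Λ j * X j ^ 2)
    (by fun_prop)
  have hX₀ne : X₀ ≠ 0 := by
    rintro rfl
    simp at hX₀
  refine (quadForm_pos hsym hoff hrow hirr hΛ hj₀ hX₀ne).trans_le (le_csInf ?_ ?_)
  · exact ⟨_, e, (Pi.single_nonneg.mpr zero_le_one : 0 ≤ e), he, rfl⟩
  · rintro r ⟨X, -, hX, rfl⟩
    exact hmin hX

/-- Positivity of the decay rate: with `Γ` a symmetric irreducible generator matrix,
`Λ_j ≥ 0` with some `Λ_{j₀} > 0`, the infimum over the nonnegative unit sphere of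
`⟨(-Γ + Λ_d)X, X⟩` is positive. -/
theorem stmt_8 (N : ℕ) (hN : 2 ≤ N) (Γ : Matrix (Fin N) (Fin N) ℝ) (Λ : Fin N → ℝ)
    (hsym : Γ.IsSymm)
    (hoff : ∀ j l, j ≠ l → 0 ≤ Γ j l)
    (hrow : ∀ j, ∑ l, Γ j l = 0)
    (hirr : ∀ S : Set (Fin N), S.Nonempty → Sᶜ.Nonempty →
      ∃ j ∈ S, ∃ l ∈ Sᶜ, Γ j l ≠ 0)
    (hΛ : ∀ j, 0 ≤ Λ j) (j₀ : Fin N) (hj₀ : 0 < Λ j₀) :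
    0 < sInf { r : ℝ | ∃ X : Fin N → ℝ, (∀ j, 0 ≤ X j) ∧ (∑ j, X j ^ 2 = 1) ∧
      r = (∑ j, ∑ l, (-Γ j l) * X j * X l) + ∑ j, Λ j * X j ^ 2 } :=
  stmt_8_general N Γ Λ hsym hoff hrow hirr hΛ j₀ hj₀
end

section
/- Let Γ be a symmetric irreducible N×N generator matrix and Λ ∈ ℝ^N with Λ_j ≥ 0. For τ > 0 set Λ_∞^{1/τ} = inf_{X ∈ S₊} ⟨(-(1/τ)Γ + Λ_d)X, X⟩. Then Λ_∞^{1/τ} → (1/N) Σ_j Λ_j as τ → 0⁺ (strong coupling limit). -/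
open Filter
open scoped Topology

/-!
The functional `Q X / τ + g X`, with `Q X = -∑ Γ j l X j X l` and `g X = ∑ Λ j X j ^ 2`, is a
penalty method on the compact set `K` of nonnegative unit vectors. Wherever `g` lies below a
level `c' < min {g X | X ∈ K, Q X = 0}`, the continuous form `Q` is bounded below by some
`δ > 0` (compactness), so `δ / τ` eventually beats the deficit; hence the infimum tends to that
constrained minimum. Since `Q X = ½ ∑ Γ j l (X j - X l) ^ 2`, irreducibility forces every zero of
`Q` to be constant, i.e. `X j ^ 2 = 1 / N`, where `g` equals the average of the `Λ j`.
-/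

theorem IsCompact.eventually_lt_div_add {α : Type*} [TopologicalSpace α] {K : Set α}
    (hK : IsCompact K) {Q g : α → ℝ} (hQ : Continuous Q) (hg : Continuous g)
    (hQ₀ : ∀ x ∈ K, 0 ≤ Q x) {c c' : ℝ} (hc : ∀ x ∈ K, Q x = 0 → c ≤ g x) (hc' : c' < c) :
    ∀ᶠ τ in 𝓝[>] 0, ∀ x ∈ K, c' < Q x / τ + g x := by
  obtain ⟨m, hm⟩ := hK.bddBelow_image hg.continuousOn
  have hQpos : ∀ x ∈ K ∩ g ⁻¹' Set.Iic c', 0 < Q x := fun x ⟨hxK, hgx⟩ =>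
    (hQ₀ x hxK).lt_of_ne' fun h => (hc x hxK h).not_gt (lt_of_le_of_lt hgx hc')
  obtain ⟨δ, hδ, hQδ⟩ := (hK.inter_right (isClosed_le hg continuous_const)).exists_forall_le'
    hQ.continuousOn hQpos
  have hsmall : ∀ᶠ τ in 𝓝[>] (0 : ℝ), τ * (c' - m) < δ :=
    nhdsWithin_le_nhds <| (continuous_id.mul continuous_const).tendsto' 0 0 (zero_mul _)
      |>.eventually (gt_mem_nhds hδ)
  filter_upwards [self_mem_nhdsWithin, hsmall] with τ (hτ : 0 < τ) hτδ x hx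
  have hgm : m ≤ g x := hm ⟨x, hx, rfl⟩
  by_cases hgx : g x ≤ c'
  · have : c' - m < Q x / τ := by
      rw [lt_div_iff₀ hτ, mul_comm]
      exact hτδ.trans_le (hQδ x ⟨hx, hgx⟩)
    linarith
  · have := div_nonneg (hQ₀ x hx) hτ.le
    linarith

theorem IsCompact.tendsto_sInf_image_div_add {α : Type*} [TopologicalSpace α] {K : Set α}
    (hK : IsCompact K) {Q g : α → ℝ} (hQ : Continuous Q) (hg : Continuous g)
    (hQ₀ : ∀ x ∈ K, 0 ≤ Q x) {x₀ : α} (hx₀ : x₀ ∈ K) (hQx₀ : Q x₀ = 0)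
    (hmin : ∀ x ∈ K, Q x = 0 → g x₀ ≤ g x) :
    Tendsto (fun τ => sInf ((fun x => Q x / τ + g x) '' K)) (𝓝[>] 0) (𝓝 (g x₀)) := by
  have hlower : ∀ {b τ}, (∀ x ∈ K, b < Q x / τ + g x) →
      b ∈ lowerBounds ((fun x => Q x / τ + g x) '' K) := fun h =>
    Set.forall_mem_image.2 fun x hx => (h x hx).le
  have hval : ∀ τ, g x₀ ∈ (fun x => Q x / τ + g x) '' K := fun τ => ⟨x₀, hx₀, by simp [hQx₀]⟩
  refine tendsto_order.2 ⟨fun a ha => ?_, fun a ha => ?_⟩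
  · obtain ⟨b, hab, hb⟩ := exists_between ha
    filter_upwards [hK.eventually_lt_div_add hQ hg hQ₀ hmin hb] with τ hτ
    exact hab.trans_le (le_csInf ⟨_, hval τ⟩ (hlower hτ))
  · filter_upwards [hK.eventually_lt_div_add hQ hg hQ₀ hmin (sub_one_lt _)] with τ hτ
    exact (csInf_le ⟨_, hlower hτ⟩ (hval τ)).trans_lt ha

theorem isCompact_nonneg_sum_sq_eq_one {ι : Type*} [Fintype ι] :
    IsCompact {X : ι → ℝ | (∀ j, 0 ≤ X j) ∧ ∑ j, X j ^ 2 = 1} := by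
  have hclosed : IsClosed {X : ι → ℝ | (∀ j, 0 ≤ X j) ∧ ∑ j, X j ^ 2 = 1} := by
    simp only [Set.ofPred_and, Set.ofPred_forall]
    exact (isClosed_iInter fun j => isClosed_le continuous_const (continuous_apply j)).inter
      (isClosed_eq (by fun_prop) continuous_const)
  refine (isCompact_univ_pi fun _ => isCompact_Icc (a := (0 : ℝ)) (b := 1)).of_isClosed_subset
    hclosed fun X ⟨hX₀, hX₁⟩ j _ => ⟨hX₀ j, ?_⟩
  have : X j ^ 2 ≤ 1 := hX₁ ▸ Finset.single_le_sum (fun i _ => sq_nonneg (X i)) (Finset.mem_univ j)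
  nlinarith [hX₀ j]

theorem apply_eq_apply_of_forall_cut {ι β : Type*} {R : ι → ι → Prop}
    (hR : ∀ S : Set ι, S.Nonempty → Sᶜ.Nonempty → ∃ j ∈ S, ∃ l ∈ Sᶜ, R j l)
    {f : ι → β} (hf : ∀ j l, R j l → f j = f l) (j l : ι) : f j = f l := by
  by_contra hne
  obtain ⟨j', hj', l', hl', hR'⟩ := hR {i | f i = f j} ⟨j, rfl⟩ ⟨l, Ne.symm hne⟩
  exact hl' ((hf j' l' hR').symm.trans hj')

namespace Matrix

variable {ι : Type*} {Γ : Matrix ι ι ℝ}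

theorem mul_sub_sq_nonneg (hoff : ∀ j l, j ≠ l → 0 ≤ Γ j l) (X : ι → ℝ) (j l : ι) :
    0 ≤ Γ j l * (X j - X l) ^ 2 := by
  rcases eq_or_ne j l with rfl | h
  · simp
  · exact mul_nonneg (hoff j l h) (sq_nonneg _)

variable [Fintype ι]

theorem sum_sum_mul_sub_sq (hsym : Γ.IsSymm) (hrow : ∀ j, ∑ l, Γ j l = 0) (X : ι → ℝ) :
    ∑ j, ∑ l, Γ j l * (X j - X l) ^ 2 = -2 * ∑ j, ∑ l, Γ j l * X j * X l := by
  have hcol : ∀ l, ∑ j, Γ j l = 0 := fun l => by simpa [hsym.apply] using hrow l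
  have h₁ : ∑ j, ∑ l, Γ j l * X j ^ 2 = 0 := by
    simp [← Finset.sum_mul, hrow]
  have h₂ : ∑ j, ∑ l, Γ j l * X l ^ 2 = 0 := by
    rw [Finset.sum_comm]; simp [← Finset.sum_mul, hcol]
  calc ∑ j, ∑ l, Γ j l * (X j - X l) ^ 2
      = ∑ j, ∑ l, Γ j l * X j ^ 2 + ∑ j, ∑ l, Γ j l * X l ^ 2
          - 2 * ∑ j, ∑ l, Γ j l * X j * X l := by
        simp only [Finset.mul_sum, ← Finset.sum_add_distrib, ← Finset.sum_sub_distrib]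
        congr! 2; ring
    _ = _ := by rw [h₁, h₂]; ring

theorem sum_sum_mul_mul_nonpos (hsym : Γ.IsSymm) (hoff : ∀ j l, j ≠ l → 0 ≤ Γ j l)
    (hrow : ∀ j, ∑ l, Γ j l = 0) (X : ι → ℝ) : ∑ j, ∑ l, Γ j l * X j * X l ≤ 0 := by
  have : 0 ≤ ∑ j, ∑ l, Γ j l * (X j - X l) ^ 2 :=
    Finset.sum_nonneg fun j _ => Finset.sum_nonneg fun l _ => mul_sub_sq_nonneg hoff X j l
  linarith [sum_sum_mul_sub_sq hsym hrow X]

theorem apply_eq_of_sum_sum_mul_mul_eq_zero (hsym : Γ.IsSymm)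
    (hoff : ∀ j l, j ≠ l → 0 ≤ Γ j l) (hrow : ∀ j, ∑ l, Γ j l = 0) {X : ι → ℝ}
    (hX : ∑ j, ∑ l, Γ j l * X j * X l = 0) {j l : ι} (hjl : Γ j l ≠ 0) : X j = X l := by
  have hsum : ∑ j, ∑ l, Γ j l * (X j - X l) ^ 2 = 0 := by
    rw [sum_sum_mul_sub_sq hsym hrow, hX, mul_zero]
  have hterm := (Finset.sum_eq_zero_iff_of_nonneg fun l _ => mul_sub_sq_nonneg hoff X j l).1
    ((Finset.sum_eq_zero_iff_of_nonneg fun j _ =>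
      Finset.sum_nonneg fun l _ => mul_sub_sq_nonneg hoff X j l).1 hsum j (Finset.mem_univ j))
    l (Finset.mem_univ l)
  simpa [hjl, sub_eq_zero] using hterm

theorem sq_eq_inv_card_of_sum_sum_mul_mul_eq_zero (hsym : Γ.IsSymm)
    (hoff : ∀ j l, j ≠ l → 0 ≤ Γ j l) (hrow : ∀ j, ∑ l, Γ j l = 0)
    (hirr : ∀ S : Set ι, S.Nonempty → Sᶜ.Nonempty → ∃ j ∈ S, ∃ l ∈ Sᶜ, Γ j l ≠ 0)
    {X : ι → ℝ} (hX₁ : ∑ j, X j ^ 2 = 1) (hX : ∑ j, ∑ l, Γ j l * X j * X l = 0) (j : ι) :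
    X j ^ 2 = (Fintype.card ι : ℝ)⁻¹ := by
  have hconst := apply_eq_apply_of_forall_cut hirr fun _ _ =>
    apply_eq_of_sum_sum_mul_mul_eq_zero hsym hoff hrow hX
  refine eq_inv_of_mul_eq_one_right ?_
  simpa [hconst _ j] using hX₁

end Matrix

theorem stmt_11_general (N : ℕ) (hN : 2 ≤ N) (Γ : Matrix (Fin N) (Fin N) ℝ) (Λ : Fin N → ℝ)
    (hsym : Γ.IsSymm)
    (hoff : ∀ j l, j ≠ l → 0 ≤ Γ j l)
    (hrow : ∀ j, ∑ l, Γ j l = 0)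
    (hirr : ∀ S : Set (Fin N), S.Nonempty → Sᶜ.Nonempty →
      ∃ j ∈ S, ∃ l ∈ Sᶜ, Γ j l ≠ 0) :
    Tendsto
      (fun τ : ℝ =>
        sInf { r : ℝ | ∃ X : Fin N → ℝ, (∀ j, 0 ≤ X j) ∧ (∑ j, X j ^ 2 = 1) ∧
          r = (∑ j, ∑ l, (-((1 / τ) * Γ j l)) * X j * X l) + ∑ j, Λ j * X j ^ 2 })
      (nhdsWithin 0 (Set.Ioi 0)) (nhds ((∑ j, Λ j) / N)) := by
  let K : Set (Fin N → ℝ) := {X | (∀ j, 0 ≤ X j) ∧ ∑ j, X j ^ 2 = 1}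
  let Q : (Fin N → ℝ) → ℝ := fun X => -∑ j, ∑ l, Γ j l * X j * X l
  let g : (Fin N → ℝ) → ℝ := fun X => ∑ j, Λ j * X j ^ 2
  have hset : ∀ τ : ℝ, { r : ℝ | ∃ X : Fin N → ℝ, (∀ j, 0 ≤ X j) ∧ (∑ j, X j ^ 2 = 1) ∧
      r = (∑ j, ∑ l, (-((1 / τ) * Γ j l)) * X j * X l) + ∑ j, Λ j * X j ^ 2 }
      = (fun X => Q X / τ + g X) '' K := by
    intro τ
    have hvalue : ∀ X : Fin N → ℝ, (∑ j, ∑ l, (-((1 / τ) * Γ j l)) * X j * X l)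
        = Q X / τ := fun X => by
      simp only [Q, neg_div, Finset.sum_div, ← Finset.sum_neg_distrib]
      exact Finset.sum_congr rfl fun j _ => Finset.sum_congr rfl fun l _ => by ring
    simp only [hvalue]
    exact Set.ext fun r => ⟨fun ⟨X, h₀, h₁, hr⟩ => ⟨X, ⟨h₀, h₁⟩, hr.symm⟩,
      fun ⟨X, ⟨h₀, h₁⟩, hr⟩ => ⟨X, h₀, h₁, hr.symm⟩⟩
  have hN' : (0 : ℝ) < N := Nat.cast_pos.2 (by omega)
  let u : Fin N → ℝ := fun _ => (√N)⁻¹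
  have hu : u ∈ K := ⟨fun _ => by positivity, by simp [u, inv_pow, Real.sq_sqrt hN'.le, hN'.ne']⟩
  have hQu : Q u = 0 := by simp [Q, u, ← Finset.sum_mul, hrow]
  have hgu : g u = (∑ j, Λ j) / N := by
    simp [g, u, ← Finset.sum_mul, inv_pow, Real.sq_sqrt hN'.le, div_eq_mul_inv]
  simp only [hset, ← hgu]
  refine isCompact_nonneg_sum_sq_eq_one.tendsto_sInf_image_div_add (by fun_prop) (by fun_prop)
    (fun X _ => neg_nonneg.2 (Matrix.sum_sum_mul_mul_nonpos hsym hoff hrow X)) hu hQu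
    fun X hX hQX => ?_
  simp [g, u, inv_pow, Real.sq_sqrt hN'.le,
    Matrix.sq_eq_inv_card_of_sum_sum_mul_mul_eq_zero hsym hoff hrow hirr hX.2 (neg_eq_zero.1 hQX)]

/-- Strong-coupling limit of the decay rate: with `Λ_j ≥ 0`,
`Λ_∞^{1/τ} = inf_{X ∈ S₊} ⟨(-(1/τ)Γ + Λ_d)X, X⟩ → (1/N)∑_j Λ_j` as `τ → 0⁺`. -/
theorem stmt_11 (N : ℕ) (hN : 2 ≤ N) (Γ : Matrix (Fin N) (Fin N) ℝ) (Λ : Fin N → ℝ)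
    (hsym : Γ.IsSymm)
    (hoff : ∀ j l, j ≠ l → 0 ≤ Γ j l)
    (hrow : ∀ j, ∑ l, Γ j l = 0)
    (hirr : ∀ S : Set (Fin N), S.Nonempty → Sᶜ.Nonempty →
      ∃ j ∈ S, ∃ l ∈ Sᶜ, Γ j l ≠ 0)
    (hΛ : ∀ j, 0 ≤ Λ j) :
    Tendsto
      (fun τ : ℝ =>
        sInf { r : ℝ | ∃ X : Fin N → ℝ, (∀ j, 0 ≤ X j) ∧ (∑ j, X j ^ 2 = 1) ∧
          r = (∑ j, ∑ l, (-((1 / τ) * Γ j l)) * X j * X l) + ∑ j, Λ j * X j ^ 2 })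
      (nhdsWithin 0 (Set.Ioi 0)) (nhds ((∑ j, Λ j) / N)) :=
  stmt_11_general N hN Γ Λ hsym hoff hrow hirr
end

section
/- Let h(v) = v/√(c² - v²) on (0, c) with c = n₁kdθ > 0, and for 1 ≤ j ≤ N let σ_j ∈ (π/2+(j-1)π, π/2+jπ) satisfy tan(σ_j) = -h(σ_j). Then the sequence j ↦ σ_j - jπ is strictly decreasing and contained in (-π/2, 0). -/
/-!
Write `σ_j = jπ + r_j`. By `π`-periodicity `tan r_j = tan σ_j = -h(σ_j) < 0` with
`r_j ∈ (-π/2, π/2)`, so `r_j < 0`. Since `h` is strictly increasing and `σ_j < σ_{j+1}`,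
`tan r_{j+1} < tan r_j`, and `tan` is strictly increasing on `(-π/2, π/2)`.
-/

open Real Set

noncomputable def pekerisH (c v : ℝ) : ℝ := v / √(c ^ 2 - v ^ 2)

lemma pekerisH_pos {c v : ℝ} (hv : 0 < v) (hvc : v < c) : 0 < pekerisH c v :=
  div_pos hv (sqrt_pos.2 (by nlinarith))

lemma pekerisH_strictMonoOn (c : ℝ) : StrictMonoOn (pekerisH c) (Ico 0 c) := by
  rintro a ⟨ha, -⟩ b ⟨-, hbc⟩ hab
  have hsb : 0 < √(c ^ 2 - b ^ 2) := sqrt_pos.2 (by nlinarith)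
  calc a / √(c ^ 2 - a ^ 2) ≤ a / √(c ^ 2 - b ^ 2) :=
        div_le_div_of_nonneg_left ha hsb (sqrt_le_sqrt (by nlinarith))
    _ < b / √(c ^ 2 - b ^ 2) := by gcongr

lemma sub_nat_mul_pi_mem_Ioo {x : ℝ} {j : ℕ} (hl : π / 2 + ((j : ℝ) - 1) * π < x)
    (hr : x < π / 2 + (j : ℝ) * π) : x - j * π ∈ Ioo (-(π / 2)) (π / 2) :=
  ⟨by linarith, by linarith⟩

lemma neg_of_tan_neg {x : ℝ} (hx : x ∈ Ioo (-(π / 2)) (π / 2)) (htan : tan x < 0) : x < 0 := by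
  by_contra! h
  exact htan.not_ge (tan_nonneg_of_nonneg_of_le_pi_div_two h hx.2.le)

theorem stmt_19_general (c : ℝ) (N : ℕ) (σ : ℕ → ℝ)
    (hσmem : ∀ j : ℕ, 1 ≤ j → j ≤ N →
      π / 2 + ((j : ℝ) - 1) * π < σ j ∧ σ j < π / 2 + (j : ℝ) * π ∧
        0 < σ j ∧ σ j < c)
    (hσeq : ∀ j : ℕ, 1 ≤ j → j ≤ N →
      Real.tan (σ j) = - (σ j / Real.sqrt (c ^ 2 - σ j ^ 2))) :
    (∀ j : ℕ, 1 ≤ j → j ≤ N →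
      -(π / 2) < σ j - (j : ℝ) * π ∧ σ j - (j : ℝ) * π < 0) ∧
    (∀ j : ℕ, 1 ≤ j → j + 1 ≤ N →
      σ (j + 1) - ((j : ℝ) + 1) * π < σ j - (j : ℝ) * π) := by
  have hshift : ∀ j, 1 ≤ j → j ≤ N → σ j - j * π ∈ Ioo (-(π / 2)) (π / 2) ∧
      tan (σ j - j * π) = -pekerisH c (σ j) := fun j h1 hN =>
    ⟨sub_nat_mul_pi_mem_Ioo (hσmem j h1 hN).1 (hσmem j h1 hN).2.1,
      (tan_sub_nat_mul_pi _ j).trans (hσeq j h1 hN)⟩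
  refine ⟨fun j h1 hN => ?_, fun j h1 hN => ?_⟩
  · obtain ⟨hmem, htan⟩ := hshift j h1 hN
    obtain ⟨-, -, hpos, hltc⟩ := hσmem j h1 hN
    exact ⟨hmem.1, neg_of_tan_neg hmem (htan ▸ neg_neg_of_pos (pekerisH_pos hpos hltc))⟩
  · obtain ⟨hmem, htan⟩ := hshift j h1 (by omega)
    obtain ⟨hmem', htan'⟩ := hshift (j + 1) (by omega) hN
    obtain ⟨-, hσ_lt, hpos, -⟩ := hσmem j h1 (by omega)
    obtain ⟨hσ'_gt, -, -, hσ'_ltc⟩ := hσmem (j + 1) (by omega) hN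
    push_cast at hmem' htan' hσ'_gt
    have hσ_lt_σ' : σ j < σ (j + 1) := by linarith
    have htan_lt : tan (σ (j + 1) - (j + 1) * π) < tan (σ j - j * π) := by
      rw [htan, htan', neg_lt_neg_iff]
      exact pekerisH_strictMonoOn c ⟨hpos.le, hσ_lt_σ'.trans hσ'_ltc⟩
        ⟨hpos.le.trans hσ_lt_σ'.le, hσ'_ltc⟩ hσ_lt_σ'
    exact (strictMonoOn_tan.lt_iff_lt hmem' hmem).1 htan_lt

/-- Monotonicity of the Pekeris modal parameters: if `σ_j ∈ (π/2+(j-1)π, π/2+jπ)`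
solves `tan σ_j = -σ_j/√(c² - σ_j²)` with `0 < σ_j < c`, then `j ↦ σ_j - jπ` is
contained in `(-π/2, 0)` and strictly decreasing. -/
theorem stmt_19 (c : ℝ) (hc : 0 < c) (N : ℕ) (σ : ℕ → ℝ)
    (hσmem : ∀ j : ℕ, 1 ≤ j → j ≤ N →
      π / 2 + ((j : ℝ) - 1) * π < σ j ∧ σ j < π / 2 + (j : ℝ) * π ∧
        0 < σ j ∧ σ j < c)
    (hσeq : ∀ j : ℕ, 1 ≤ j → j ≤ N →
      Real.tan (σ j) = - (σ j / Real.sqrt (c ^ 2 - σ j ^ 2))) :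
    (∀ j : ℕ, 1 ≤ j → j ≤ N →
      -(π / 2) < σ j - (j : ℝ) * π ∧ σ j - (j : ℝ) * π < 0) ∧
    (∀ j : ℕ, 1 ≤ j → j + 1 ≤ N →
      σ (j + 1) - ((j : ℝ) + 1) * π < σ j - (j : ℝ) * π) :=
  stmt_19_general c N σ hσmem hσeq
end
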